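/- Let G ⇉ M be a Lie groupoid with source s, target t, and let F_G ⊆ TG be an involutive multiplicative subbundle (a subgroupoid of the tangent groupoid TG ⇉ TM over F_M = F_G ∩ TM). Then F_M is an involutive subbundle of TM: for any two sections X̄, Ȳ of F_M, their Lie bracket [X̄,Ȳ] is again a section of F_M. -/

import Mathlib

variable {G M : Type*} [NormedAddCommGroup G] [NormedSpace ℝ G]
  [NormedAddCommGroup M] [NormedSpace ℝ M]

/-- The Lie bracket of vector fields on a model space: `[X,Y] = DY(X) - DX(Y)`. -/
noncomputable def vfBracket {E : Type*} [NormedAddCommGroup E] [NormedSpace ℝ E]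
    (X Y : E → E) : E → E :=
  fun m => fderiv ℝ Y m (X m) - fderiv ℝ X m (Y m)

lemma aux_rel {s : G → M} (hs : ContDiff ℝ (⊤ : ℕ∞) s) {Z : G → G} {Zbar : M → M}
    (hZ : ContDiff ℝ (⊤ : ℕ∞) Z) (hZb : ContDiff ℝ (⊤ : ℕ∞) Zbar)
    (hrel : ∀ g, fderiv ℝ s g (Z g) = Zbar (s g)) (g : G) (v : G) :
    fderiv ℝ (fderiv ℝ s) g v (Z g) + fderiv ℝ s g (fderiv ℝ Z g v)
      = fderiv ℝ Zbar (s g) (fderiv ℝ s g v) := by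
  have hs' : ContDiff ℝ (⊤ : ℕ∞) (fderiv ℝ s) := hs.fderiv_right (by simp)
  have h1 : DifferentiableAt ℝ (fderiv ℝ s) g := hs'.differentiable (by simp) g
  have h2 : DifferentiableAt ℝ Z g := hZ.differentiable (by simp) g
  have h3 : DifferentiableAt ℝ Zbar (s g) := hZb.differentiable (by simp) (s g)
  have h4 : DifferentiableAt ℝ s g := hs.differentiable (by simp) g
  have e1 : fderiv ℝ (fun g => fderiv ℝ s g (Z g)) g = fderiv ℝ (Zbar ∘ s) g := by
    congr 1; ext x; exact hrel x
  rw [fderiv_clm_apply h1 h2, fderiv_comp g h3 h4] at e1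
  have := congrFun (congrArg DFunLike.coe e1) v
  rw [add_comm]; simpa using this

/-- let `G ⇉ M` be a Lie groupoid with source `s`, and `F_G ⊆ TG` an involutive
multiplicative subbundle over `F_M = F_G ∩ TM`.  Then `F_M` is an involutive subbundle of
`TM`.  Multiplicativity of `F_G` is encoded by its consequences used in the proof
(Proposition 3.5 of the paper): `Ts` maps `F_G` into `F_M`, and every smooth section of
`F_M` lifts to a smooth `s`-related section of `F_G` (Corollary 3.4). -/
theorem stmt9
    (s : G → M) (hs : ContDiff ℝ (⊤ : ℕ∞) s) (hssurj : Function.Surjective s)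
    (F_G : G → Submodule ℝ G) (F_M : M → Submodule ℝ M)
    -- `F_G` is involutive
    (hinv : ∀ X Y : G → G, ContDiff ℝ (⊤ : ℕ∞) X → ContDiff ℝ (⊤ : ℕ∞) Y →
      (∀ g, X g ∈ F_G g) → (∀ g, Y g ∈ F_G g) → ∀ g, vfBracket X Y g ∈ F_G g)
    -- `Ts` maps `F_G` into `F_M` (F_G is a subgroupoid of `TG ⇉ TM` over `F_M`)
    (hproj : ∀ g, ∀ v ∈ F_G g, fderiv ℝ s g v ∈ F_M (s g))
    -- every smooth section of `F_M` admits a smooth `s`-related lift in `Γ(F_G)`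
    (hlift : ∀ Xbar : M → M, ContDiff ℝ (⊤ : ℕ∞) Xbar → (∀ m, Xbar m ∈ F_M m) →
      ∃ X : G → G, ContDiff ℝ (⊤ : ℕ∞) X ∧ (∀ g, X g ∈ F_G g) ∧
        ∀ g, fderiv ℝ s g (X g) = Xbar (s g)) :
    -- conclusion: `F_M` is involutive
    ∀ Xbar Ybar : M → M, ContDiff ℝ (⊤ : ℕ∞) Xbar → ContDiff ℝ (⊤ : ℕ∞) Ybar →
      (∀ m, Xbar m ∈ F_M m) → (∀ m, Ybar m ∈ F_M m) →
      ∀ m, vfBracket Xbar Ybar m ∈ F_M m := by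
  intro Xbar Ybar hXb hYb hXm hYm m
  obtain ⟨g, rfl⟩ := hssurj m
  obtain ⟨X, hX, hXF, hXs⟩ := hlift Xbar hXb hXm
  obtain ⟨Y, hY, hYF, hYs⟩ := hlift Ybar hYb hYm
  have hsymm : fderiv ℝ (fderiv ℝ s) g (X g) (Y g) = fderiv ℝ (fderiv ℝ s) g (Y g) (X g) :=
    (hs.contDiffAt.isSymmSndFDerivAt (by rw [minSmoothness_of_isRCLikeNormedField]; exact WithTop.coe_le_coe.mpr le_top)) (X g) (Y g)
  have hY' := aux_rel hs hY hYb hYs g (X g)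
  have hX' := aux_rel hs hX hXb hXs g (Y g)
  have key : fderiv ℝ s g (vfBracket X Y g) = vfBracket Xbar Ybar (s g) := by
    simp only [vfBracket, map_sub]
    have eY : fderiv ℝ s g (fderiv ℝ Y g (X g))
        = fderiv ℝ Ybar (s g) (fderiv ℝ s g (X g)) - fderiv ℝ (fderiv ℝ s) g (X g) (Y g) := by
      rw [← hY']; abel
    have eX : fderiv ℝ s g (fderiv ℝ X g (Y g))
        = fderiv ℝ Xbar (s g) (fderiv ℝ s g (Y g)) - fderiv ℝ (fderiv ℝ s) g (Y g) (X g) := by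
      rw [← hX']; abel
    rw [eY, eX, hsymm, hXs, hYs]; abel
  rw [← key]
  exact hproj g _ (hinv X Y hX hY hXF hYF g)
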